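/- arXiv:2508.16719 — 4 statements merged into one kernel-verified Lean document; each statement's English description precedes it below -/
import Mathlib

section
/- Let m ≥ 1, β > 0, ε > 0, let y : Fin m → ℝ satisfy y_j ≥ 0 for all j and Σ_j y_j ≤ β, and let c : Fin m → ℝ satisfy Σ_j c_j² ≤ 1. If the Euclidean norm satisfies (Σ_j (c_j − √(y_j/β))²)^{1/2} ≤ ε/(2β), then Σ_j |y_j − β·c_j²| ≤ ε. -/
/-- State-preparation-pair error analysis: if nonnegative weights `y` have ℓ¹-norm at
most `β`, the amplitudes `c` satisfy `Σ c_j² ≤ 1`, and `c` is within ℓ² distance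
`ε/(2β)` of the target amplitudes `√(y_j/β)`, then the encoded weights `β c_j²`
approximate `y_j` to total ℓ¹ error `ε`. -/
theorem state_preparation_pair_error {m : ℕ} (hm : 1 ≤ m) (β ε : ℝ)
    (hβ : 0 < β) (hε : 0 < ε) (y c : Fin m → ℝ)
    (hy : ∀ j, 0 ≤ y j) (hy1 : ∑ j, y j ≤ β) (hc : ∑ j, (c j) ^ 2 ≤ 1)
    (hclose : Real.sqrt (∑ j, (c j - Real.sqrt (y j / β)) ^ 2) ≤ ε / (2 * β)) :
    ∑ j, |y j - β * (c j) ^ 2| ≤ ε := by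
  set a : Fin m → ℝ := fun j => Real.sqrt (y j / β) with ha
  have ha2 : ∀ j, a j ^ 2 = y j / β := fun j =>
    Real.sq_sqrt (div_nonneg (hy j) hβ.le)
  have hya : ∀ j, y j = β * a j ^ 2 := by
    intro j; rw [ha2 j]; field_simp
  have hsa : ∑ j, a j ^ 2 ≤ 1 := by
    calc ∑ j, a j ^ 2 = (∑ j, y j) / β := by
          simp [ha2, Finset.sum_div]
      _ ≤ 1 := by rw [div_le_one hβ]; exact hy1
  have hCS : ∑ j, |c j - a j| * |a j + c j| ≤
      Real.sqrt (∑ j, |c j - a j| ^ 2) * Real.sqrt (∑ j, |a j + c j| ^ 2) :=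
    Real.sum_mul_le_sqrt_mul_sqrt _ _ _
  have h1 : Real.sqrt (∑ j, |c j - a j| ^ 2) ≤ ε / (2 * β) := by
    simpa [sq_abs] using hclose
  have h2 : Real.sqrt (∑ j, |a j + c j| ^ 2) ≤ 2 := by
    rw [show (2:ℝ) = Real.sqrt 4 by
      rw [show (4:ℝ) = 2^2 by norm_num, Real.sqrt_sq (by norm_num)]]
    apply Real.sqrt_le_sqrt
    have hpt : ∀ j, |a j + c j| ^ 2 ≤ 2 * a j ^ 2 + 2 * c j ^ 2 := by
      intro j; rw [sq_abs]; nlinarith [sq_nonneg (a j - c j)]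
    calc ∑ j, |a j + c j| ^ 2 ≤ ∑ j, (2 * a j ^ 2 + 2 * c j ^ 2) :=
          Finset.sum_le_sum fun j _ => hpt j
      _ = 2 * (∑ j, a j ^ 2) + 2 * (∑ j, c j ^ 2) := by
          rw [Finset.sum_add_distrib, ← Finset.mul_sum, ← Finset.mul_sum]
      _ ≤ 4 := by linarith
  have key : ∑ j, |y j - β * c j ^ 2| = β * ∑ j, |c j - a j| * |a j + c j| := by
    rw [Finset.mul_sum]
    refine Finset.sum_congr rfl fun j _ => ?_
    rw [hya j, ← abs_mul, ← mul_sub, abs_mul, abs_of_pos hβ]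
    rw [show (c j - a j) * (a j + c j) = c j ^ 2 - a j ^ 2 by ring, abs_sub_comm]
  rw [key]
  calc β * ∑ j, |c j - a j| * |a j + c j|
      ≤ β * (Real.sqrt (∑ j, |c j - a j| ^ 2) * Real.sqrt (∑ j, |a j + c j| ^ 2)) :=
        mul_le_mul_of_nonneg_left hCS hβ.le
    _ ≤ β * (ε / (2 * β) * 2) := by
        apply mul_le_mul_of_nonneg_left _ hβ.le
        exact mul_le_mul h1 h2 (Real.sqrt_nonneg _)
          (le_trans (Real.sqrt_nonneg _) h1)
    _ = ε := by field_simp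
end

section
/- (Hellmann–Feynman theorem) Let n ≥ 1, let H : ℝ → (n×n complex matrices) be differentiable at x₀ with H(x) Hermitian for all x, let ψ : ℝ → ℂⁿ be differentiable at x₀ with ‖ψ(x)‖ = 1 for all x in a neighborhood of x₀, and let E : ℝ → ℝ satisfy H(x)·ψ(x) = E(x)·ψ(x) for all x in a neighborhood of x₀. Then E is differentiable at x₀ and E'(x₀) = ⟨ψ(x₀), H'(x₀)·ψ(x₀)⟩ (this inner product is real since H'(x₀) is Hermitian). -/
/-- Hellmann–Feynman theorem: if `H x` is a family of Hermitian matrices differentiable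
(entrywise) at `x₀` with derivative `H'`, `ψ x` is a normalized eigenvector family
differentiable at `x₀` with eigenvalue `E x` near `x₀`, then `E` is differentiable at
`x₀` with `E'(x₀) = ⟨ψ(x₀), H'(x₀) ψ(x₀)⟩`, and this inner product is real. -/
theorem hellmann_feynman {n : ℕ} (hn : 1 ≤ n)
    (H : ℝ → Matrix (Fin n) (Fin n) ℂ) (H' : Matrix (Fin n) (Fin n) ℂ) (x₀ : ℝ)
    (hHderiv : ∀ i j, HasDerivAt (fun x => H x i j) (H' i j) x₀)
    (hHerm : ∀ x, (H x).IsHermitian)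
    (ψ : ℝ → EuclideanSpace ℂ (Fin n)) (hψdiff : DifferentiableAt ℝ ψ x₀)
    (hψnorm : ∀ᶠ x in nhds x₀, ‖ψ x‖ = 1)
    (E : ℝ → ℝ)
    (heig : ∀ᶠ x in nhds x₀, Matrix.toEuclideanLin (H x) (ψ x) = (E x : ℂ) • ψ x) :
    HasDerivAt E ((inner ℂ (ψ x₀) (Matrix.toEuclideanLin H' (ψ x₀)) : ℂ)).re x₀ ∧
      ((inner ℂ (ψ x₀) (Matrix.toEuclideanLin H' (ψ x₀)) : ℂ)).im = 0 := by
  have hψ : HasDerivAt ψ (deriv ψ x₀) x₀ := hψdiff.hasDerivAt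
  set ψd := deriv ψ x₀ with hψd
  -- component derivatives of ψ
  have hψi : ∀ i, HasDerivAt (fun x => ψ x i) (ψd i) x₀ := fun i => by
    have := ((EuclideanSpace.proj i).restrictScalars ℝ).hasFDerivAt.comp_hasDerivAt x₀ hψ
    simpa [Function.comp_def] using this
  -- derivative of φ x = H x ψ x
  set φ : ℝ → EuclideanSpace ℂ (Fin n) := fun x => Matrix.toEuclideanLin (H x) (ψ x) with hφdef
  set φd : EuclideanSpace ℂ (Fin n) :=
    Matrix.toEuclideanLin H' (ψ x₀) + Matrix.toEuclideanLin (H x₀) ψd with hφd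
  have hφ : HasDerivAt φ φd x₀ := by
    have hcomp : ∀ i, HasDerivAt (fun x => φ x i)
        (∑ j, (H' i j * ψ x₀ j + H x₀ i j * ψd j)) x₀ := by
      intro i
      have : ∀ x, φ x i = ∑ j, H x i j * ψ x j := by
        intro x
        simp [hφdef, Matrix.toEuclideanLin_apply, Matrix.mulVec, dotProduct]
      simp only [funext this]
      exact HasDerivAt.fun_sum fun j _ => (hHderiv i j).mul (hψi j)
    have hφdi : ∀ i, φd i = ∑ j, (H' i j * ψ x₀ j + H x₀ i j * ψd j) := by
      intro i
      simp [hφd, Matrix.toEuclideanLin_apply, Matrix.mulVec, dotProduct,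
        Finset.sum_add_distrib]
    have hpi : HasDerivAt (fun x => (WithLp.equiv 2 (Fin n → ℂ)) (φ x))
        ((WithLp.equiv 2 (Fin n → ℂ)) φd) x₀ :=
      hasDerivAt_pi.2 fun i => by rw [show ((WithLp.equiv 2 (Fin n → ℂ)) φd) i = φd i from rfl, hφdi i]; exact hcomp i
    have := (((EuclideanSpace.equiv (Fin n) ℂ).symm.toContinuousLinearMap).restrictScalars
      ℝ).hasFDerivAt.comp_hasDerivAt x₀ hpi
    exact this
  -- f x = ⟪ψ x, φ x⟫
  set D : ℂ := inner ℂ (ψ x₀) φd + inner ℂ ψd (φ x₀) with hD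
  have hf : HasDerivAt (fun x => (inner ℂ (ψ x) (φ x) : ℂ)) D x₀ := hψ.inner ℂ hφ
  -- f agrees with E near x₀
  have hfeq : (fun x => (E x : ℂ)) =ᶠ[nhds x₀] fun x => (inner ℂ (ψ x) (φ x) : ℂ) := by
    filter_upwards [heig, hψnorm] with x hx hnx
    simp only [hφdef, hx, inner_smul_right]
    rw [inner_self_eq_norm_sq_to_K, hnx]
    simp
  have hE : HasDerivAt (fun x => (E x : ℂ)) D x₀ := hf.congr_of_eventuallyEq hfeq
  have hEre : HasDerivAt E D.re x₀ := by
    have := Complex.reCLM.hasFDerivAt.comp_hasDerivAt x₀ hE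
    simpa [Function.comp_def] using this
  have hEim : D.im = 0 := by
    have h1 := Complex.imCLM.hasFDerivAt.comp_hasDerivAt x₀ hE
    have h2 : HasDerivAt (fun _ : ℝ => (0 : ℝ)) D.im x₀ := by
      refine h1.congr_of_eventuallyEq (Filter.Eventually.of_forall fun x => ?_)
      simp
    exact h2.unique (hasDerivAt_const x₀ 0)
  -- ⟪ψ, ψ⟫ is constant, hence its derivative vanishes
  have hnil : (inner ℂ (ψ x₀) ψd : ℂ) + inner ℂ ψd (ψ x₀) = 0 := by
    have h1 : HasDerivAt (fun x => (inner ℂ (ψ x) (ψ x) : ℂ))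
        ((inner ℂ (ψ x₀) ψd : ℂ) + inner ℂ ψd (ψ x₀)) x₀ := hψ.inner ℂ hψ
    have h2 : HasDerivAt (fun _ : ℝ => (1 : ℂ))
        ((inner ℂ (ψ x₀) ψd : ℂ) + inner ℂ ψd (ψ x₀)) x₀ := by
      refine h1.congr_of_eventuallyEq ?_
      filter_upwards [hψnorm] with x hx
      rw [inner_self_eq_norm_sq_to_K, hx]
      simp
    exact (h2.unique (hasDerivAt_const x₀ 1))
  -- identify D with the target inner product
  have hφ₀ : φ x₀ = (E x₀ : ℂ) • ψ x₀ := heig.self_of_nhds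
  have hsym := (Matrix.isHermitian_iff_isSymmetric.1 (hHerm x₀))
  have hDT : D = (inner ℂ (ψ x₀) (Matrix.toEuclideanLin H' (ψ x₀)) : ℂ) := by
    have e1 : (inner ℂ (ψ x₀) (Matrix.toEuclideanLin (H x₀) ψd) : ℂ)
        = (E x₀ : ℂ) * inner ℂ (ψ x₀) ψd := by
      rw [← hsym (ψ x₀) ψd, heig.self_of_nhds, inner_smul_left]
      simp
    have e2 : (inner ℂ ψd (φ x₀) : ℂ) = (E x₀ : ℂ) * inner ℂ ψd (ψ x₀) := by
      rw [hφ₀, inner_smul_right]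
    rw [hD, hφd, inner_add_right, e1, e2]
    linear_combination (E x₀ : ℂ) * hnil
  rw [← hDT]
  exact ⟨hEre, hEim⟩
end

section
/- (Discretization error of thermodynamic integration by left Riemann sum) Let n ≥ 1, let L_A, L_B, H_A, H_B be Hermitian n×n complex matrices, let ρ₀ be a unit vector in ℂⁿ, let t_eq ≥ 0, let N_Λ ≥ 1 be a natural number, and for Λ ∈ ℝ set L_Λ = L_A + Λ·(L_B − L_A) and ⟨H_B − H_A⟩_Λ = Re⟨ρ₀, exp(i·t_eq·L_Λ)·(H_B − H_A)·exp(−i·t_eq·L_Λ)·ρ₀⟩. Then |∫₀¹ ⟨H_B − H_A⟩_Λ dΛ − (1/N_Λ)·Σ_{k=0}^{N_Λ−1} ⟨H_B − H_A⟩_{k/N_Λ}| ≤ ‖L_B − L_A‖·‖H_B − H_A‖·t_eq / N_Λ. -/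
open scoped Matrix.Norms.L2Operator

noncomputable section

open NormedSpace Set intervalIntegral

/-! ### Auxiliary lemmas: left Riemann sum error for Lipschitz functions -/

lemma piece_bound {f : ℝ → ℝ} {C : ℝ} (hC : 0 ≤ C)
    (hf : ∀ x y : ℝ, |f x - f y| ≤ C * |x - y|) {a b : ℝ} (hab : a ≤ b) :
    |(∫ x in a..b, f x) - (b - a) * f a| ≤ C * (b - a) ^ 2 / 2 := by
  have hcont : Continuous f := by
    have : LipschitzWith C.toNNReal f := by
      apply LipschitzWith.of_dist_le_mul
      intro x y
      simpa [Real.dist_eq, Real.coe_toNNReal C hC] using hf x y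
    exact this.continuous
  have hint : IntervalIntegrable f MeasureTheory.volume a b :=
    hcont.intervalIntegrable a b
  have h1 : (∫ x in a..b, f x) - (b - a) * f a = ∫ x in a..b, (f x - f a) := by
    rw [intervalIntegral.integral_sub hint (intervalIntegrable_const), integral_const, smul_eq_mul]
  rw [h1]
  have h2 : ∀ x ∈ Set.uIcc a b, ‖f x - f a‖ ≤ C * (x - a) := by
    intro x hx
    rw [Set.uIcc_of_le hab] at hx
    have := hf x a
    rw [Real.norm_eq_abs]
    calc |f x - f a| ≤ C * |x - a| := hf x a
      _ = C * (x - a) := by rw [abs_of_nonneg (by linarith [hx.1])]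
  have hxa : (∫ x in a..b, (x - a)) = (b - a) ^ 2 / 2 := by
    rw [intervalIntegral.integral_sub (by apply Continuous.intervalIntegrable; continuity)
      intervalIntegrable_const, integral_id, integral_const, smul_eq_mul]
    ring
  have h3 : ‖∫ x in a..b, (f x - f a)‖ ≤ C * (b - a) ^ 2 / 2 := by
    have hgint : IntervalIntegrable (fun x => C * (x - a)) MeasureTheory.volume a b := by
      apply Continuous.intervalIntegrable; continuity
    have hgval : (∫ x in a..b, C * (x - a)) = C * (b - a) ^ 2 / 2 := by
      rw [intervalIntegral.integral_const_mul, hxa]; ring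
    have hb := intervalIntegral.norm_integral_le_abs_of_norm_le (μ := MeasureTheory.volume)
      (f := fun x => f x - f a) (g := fun x => C * (x - a)) (a := a) (b := b) ?_ hgint
    · refine hb.trans_eq ?_
      rw [show |∫ (t : ℝ) in a..b, (fun x => C * (x - a)) t| = |∫ x in a..b, C * (x - a)| from rfl,
        hgval, abs_of_nonneg]
      positivity
    · filter_upwards [MeasureTheory.ae_restrict_mem measurableSet_uIoc] with x hx
      rw [Set.uIoc_of_le hab] at hx
      exact h2 x (by rw [Set.uIcc_of_le hab]; exact Set.mem_Icc.2 ⟨le_of_lt hx.1, hx.2⟩)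
  calc |∫ x in a..b, (f x - f a)| = ‖∫ x in a..b, (f x - f a)‖ := rfl
    _ ≤ C * (b - a) ^ 2 / 2 := h3

lemma riemann_bound {f : ℝ → ℝ} {C : ℝ} (hC : 0 ≤ C)
    (hf : ∀ x y : ℝ, |f x - f y| ≤ C * |x - y|) {N : ℕ} (hN : 1 ≤ N) :
    |(∫ x in (0:ℝ)..1, f x) - (1 / N) * ∑ k ∈ Finset.range N, f (k / N)| ≤ C / (2 * N) := by
  have hN0 : (0:ℝ) < N := by exact_mod_cast hN
  have hcont : Continuous f := by
    have : LipschitzWith C.toNNReal f := by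
      apply LipschitzWith.of_dist_le_mul
      intro x y
      simpa [Real.dist_eq, Real.coe_toNNReal C hC] using hf x y
    exact this.continuous
  set a : ℕ → ℝ := fun k => (k : ℝ) / N with ha
  have hsum : (∫ x in (0:ℝ)..1, f x) = ∑ k ∈ Finset.range N, ∫ x in a k..a (k+1), f x := by
    rw [intervalIntegral.sum_integral_adjacent_intervals
      (fun k _ => hcont.intervalIntegrable _ _)]
    simp [ha, div_self hN0.ne']
  rw [hsum, Finset.mul_sum, ← Finset.sum_sub_distrib]
  calc |∑ k ∈ Finset.range N, ((∫ x in a k..a (k+1), f x) - 1 / N * f (↑k / ↑N))|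
      ≤ ∑ k ∈ Finset.range N, |(∫ x in a k..a (k+1), f x) - 1 / N * f (↑k / ↑N)| :=
        Finset.abs_sum_le_sum_abs _ _
    _ ≤ ∑ k ∈ Finset.range N, C * (1/N) ^ 2 / 2 := by
        apply Finset.sum_le_sum
        intro k _
        have hab : a k ≤ a (k+1) := by
          apply (div_le_div_iff_of_pos_right hN0).mpr
          push_cast; linarith
        have hd : a (k+1) - a k = 1 / N := by
          simp only [ha]; push_cast; field_simp; ring
        have hpb := piece_bound hC hf hab
        rw [hd] at hpb
        have : (1:ℝ) / N * f (↑k / ↑N) = (1/N) * f (a k) := rfl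
        rw [this]
        calc |(∫ x in a k..a (k+1), f x) - 1 / ↑N * f (a k)| ≤ C * (1/N)^2/2 := by
              have : (1:ℝ)/N * f (a k) = (1/N) * f (a k) := rfl
              linarith [hpb]
          _ = C * (1/↑N)^2/2 := rfl
    _ = C / (2 * N) := by
        rw [Finset.sum_const, Finset.card_range, nsmul_eq_mul]
        field_simp

/-! ### Auxiliary lemmas: matrix exponential estimates -/

variable {n : ℕ}

lemma norm_exp_I_smul (hn : 1 ≤ n) {M : Matrix (Fin n) (Fin n) ℂ} (hM : M.IsHermitian)
    (θ : ℝ) : ‖NormedSpace.exp ((Complex.I * (θ : ℂ)) • M)‖ = 1 := by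
  haveI : Nonempty (Fin n) := Fin.pos_iff_nonempty.mp hn
  haveI : Nontrivial (Matrix (Fin n) (Fin n) ℂ) := by infer_instance
  apply CStarRing.norm_of_mem_unitary
  letI : NormedAlgebra ℚ (Matrix (Fin n) (Fin n) ℂ) := NormedAlgebra.restrictScalars ℚ ℂ _
  apply NormedSpace.exp_mem_unitary_of_mem_skewAdjoint
  rw [skewAdjoint.mem_iff]
  have : star ((Complex.I * (θ : ℂ)) • M) = (starRingEnd ℂ (Complex.I * θ)) • star M := by
    rw [star_smul]; rfl
  rw [this, show star M = M from hM,
    show (starRingEnd ℂ) (Complex.I * (θ:ℂ)) = -(Complex.I * (θ:ℂ)) by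
      simp [Complex.conj_ofReal], neg_smul]

lemma hasDerivAt_comp_ofReal {E : Type*} [NormedAddCommGroup E] [NormedSpace ℂ E]
    {e : ℂ → E} {e' : E} {z : ℝ} (hf : HasDerivAt e e' (z : ℂ)) :
    HasDerivAt (fun y : ℝ => e (y : ℂ)) e' z := by
  simpa [Function.comp_def] using HasDerivAt.scomp (𝕜 := ℝ) (𝕜' := ℂ) z hf Complex.ofRealCLM.hasDerivAt

lemma norm_exp_sub_exp_le {A B : Matrix (Fin n) (Fin n) ℂ}
    (hA : ∀ s : ℝ, s ∈ Icc (0:ℝ) 1 → ‖exp ((s : ℂ) • A)‖ ≤ 1)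
    (hB : ∀ s : ℝ, s ∈ Icc (0:ℝ) 1 → ‖exp ((s : ℂ) • B)‖ ≤ 1) :
    ‖exp A - exp B‖ ≤ ‖A - B‖ := by
  set φ : ℝ → Matrix (Fin n) (Fin n) ℂ :=
    fun s => exp ((s : ℂ) • A) * exp ((1 - (s : ℂ)) • B) with hφ
  set φ' : ℝ → Matrix (Fin n) (Fin n) ℂ :=
    fun s => exp ((s : ℂ) • A) * (A - B) * exp ((1 - (s : ℂ)) • B) with hφ'
  have hder : ∀ s : ℝ, HasDerivAt φ (φ' s) s := by
    intro s
    have h1 : HasDerivAt (fun y : ℝ => exp ((y : ℂ) • A)) (exp ((s:ℂ) • A) * A) s :=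
      hasDerivAt_comp_ofReal (hasDerivAt_exp_smul_const A (s:ℂ))
    have hlin : HasDerivAt (fun z : ℂ => 1 - z) (-1) (s:ℂ) := (hasDerivAt_id _).const_sub 1
    have h2c : HasDerivAt (fun z : ℂ => exp ((1 - z) • B))
        ((-1 : ℂ) • (exp ((1 - (s:ℂ)) • B) * B)) (s:ℂ) :=
      (hasDerivAt_exp_smul_const B ((1:ℂ) - s)).scomp (s:ℂ) hlin
    have h2 : HasDerivAt (fun y : ℝ => exp ((1 - (y:ℂ)) • B))
        ((-1 : ℂ) • (exp ((1 - (s:ℂ)) • B) * B)) s :=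
      hasDerivAt_comp_ofReal h2c
    have hmul := h1.mul h2
    convert hmul using 1
    iterate 4 rfl
    have hcomm : exp ((1 - (s:ℂ)) • B) * B = B * exp ((1 - (s:ℂ)) • B) :=
      (((Commute.refl B).smul_left ((1:ℂ) - s)).exp_left).eq
    simp only [hφ', neg_one_smul, mul_neg]
    rw [hcomm]
    rw [mul_sub, sub_mul, mul_assoc, mul_assoc]
    ring_nf
    abel
  have key := norm_image_sub_le_of_norm_deriv_le_segment'
    (f := φ) (f' := φ') (C := ‖A - B‖) (a := 0) (b := 1)
    (fun x _ => (hder x).hasDerivWithinAt)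
    (fun x hx => by
      have hx1 : x ∈ Icc (0:ℝ) 1 := ⟨hx.1, hx.2.le⟩
      have hx2 : (1 - x) ∈ Icc (0:ℝ) 1 := ⟨by linarith [hx.2.le], by linarith [hx.1]⟩
      have e1 := hA x hx1
      have e2 := hB (1 - x) (by exact hx2)
      have e2' : ‖exp ((1 - (x:ℂ)) • B)‖ ≤ 1 := by
        have : ((1 - x : ℝ) : ℂ) = 1 - (x:ℂ) := by push_cast; ring
        rw [← this]; exact e2
      calc ‖φ' x‖ ≤ ‖exp ((x:ℂ) • A) * (A - B)‖ * ‖exp ((1 - (x:ℂ)) • B)‖ := norm_mul_le _ _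
        _ ≤ ‖exp ((x:ℂ) • A)‖ * ‖A - B‖ * ‖exp ((1 - (x:ℂ)) • B)‖ := by
            gcongr; exact norm_mul_le _ _
        _ ≤ 1 * ‖A - B‖ * 1 :=
            mul_le_mul (mul_le_mul_of_nonneg_right e1 (norm_nonneg _)) e2'
              (norm_nonneg _) (by positivity)
        _ = ‖A - B‖ := by ring)
    1 (by constructor <;> norm_num)
  have hφ1 : φ 1 = exp A := by
    simp [hφ, NormedSpace.exp_zero]
  have hφ0 : φ 0 = exp B := by
    simp [hφ, NormedSpace.exp_zero]
  rw [hφ1, hφ0] at key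
  simpa using key

lemma mul_split {R : Type*} [Ring R] (a c d b e : R) :
    a * d * b - c * d * e = (a - c) * d * b + c * d * (b - e) := by noncomm_ring

/-- The expectation value `⟨H_B - H_A⟩_Λ` of the energy difference in the state
obtained by evolving `ρ₀` under the interpolated Liouvillian
`L_Λ = L_A + Λ(L_B - L_A)` for time `t`. -/
def interpExpect {n : ℕ} (LA LB HA HB : Matrix (Fin n) (Fin n) ℂ)
    (ρ₀ : EuclideanSpace ℂ (Fin n)) (t Λ : ℝ) : ℝ :=
  (inner ℂ ρ₀ (Matrix.toEuclideanLin
      (NormedSpace.exp ((Complex.I * (t : ℂ)) • (LA + (Λ : ℂ) • (LB - LA)))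
        * (HB - HA)
        * NormedSpace.exp ((-(Complex.I * (t : ℂ))) • (LA + (Λ : ℂ) • (LB - LA)))) ρ₀)
    : ℂ).re

lemma re_inner_toEuclideanLin_le {X : Matrix (Fin n) (Fin n) ℂ} {ρ₀ : EuclideanSpace ℂ (Fin n)}
    (hρ₀ : ‖ρ₀‖ = 1) : |(inner ℂ ρ₀ ((Matrix.toEuclideanLin X) ρ₀) : ℂ).re| ≤ ‖X‖ := by
  have h2 : ‖(Matrix.toEuclideanLin X) ρ₀‖ ≤ ‖X‖ := by
    rw [← Matrix.coe_toEuclideanCLM_eq_toEuclideanLin]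
    calc ‖(Matrix.toEuclideanCLM (𝕜 := ℂ) X) ρ₀‖
        ≤ ‖Matrix.toEuclideanCLM (𝕜 := ℂ) X‖ * ‖ρ₀‖ := (Matrix.toEuclideanCLM (𝕜 := ℂ) X).le_opNorm ρ₀
      _ = ‖X‖ := by rw [hρ₀, mul_one, ← Matrix.cstar_norm_def]
  have h1 : ‖(inner ℂ ρ₀ ((Matrix.toEuclideanLin X) ρ₀) : ℂ)‖ ≤ ‖X‖ := by
    calc ‖(inner ℂ ρ₀ ((Matrix.toEuclideanLin X) ρ₀) : ℂ)‖
        ≤ ‖ρ₀‖ * ‖(Matrix.toEuclideanLin X) ρ₀‖ := norm_inner_le_norm _ _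
      _ ≤ ‖X‖ := by rw [hρ₀, one_mul]; exact h2
  calc |(inner ℂ ρ₀ ((Matrix.toEuclideanLin X) ρ₀) : ℂ).re|
      ≤ ‖(inner ℂ ρ₀ ((Matrix.toEuclideanLin X) ρ₀) : ℂ)‖ := Complex.abs_re_le_norm _
    _ ≤ ‖X‖ := h1

set_option maxHeartbeats 1000000 in
lemma interpExpect_lipschitz (hn : 1 ≤ n)
    (LA LB HA HB : Matrix (Fin n) (Fin n) ℂ)
    (hLA : LA.IsHermitian) (hLB : LB.IsHermitian)
    (ρ₀ : EuclideanSpace ℂ (Fin n)) (hρ₀ : ‖ρ₀‖ = 1)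
    (t : ℝ) (ht : 0 ≤ t) (x y : ℝ) :
    |interpExpect LA LB HA HB ρ₀ t x - interpExpect LA LB HA HB ρ₀ t y|
      ≤ 2 * (‖LB - LA‖ * ‖HB - HA‖ * t) * |x - y| := by
  set K := LB - LA with hK
  set D := HB - HA with hD
  set M : ℝ → Matrix (Fin n) (Fin n) ℂ := fun Λ => LA + (Λ : ℂ) • K with hM
  have hMherm : ∀ Λ : ℝ, (M Λ).IsHermitian := by
    intro Λ
    have hKh : K.IsHermitian := hLB.sub hLA
    show (LA + (Λ:ℂ) • K).IsHermitian
    unfold Matrix.IsHermitian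
    rw [Matrix.conjTranspose_add, Matrix.conjTranspose_smul, hLA.eq, hKh.eq,
      Complex.star_def, Complex.conj_ofReal]
  set U : ℝ → Matrix (Fin n) (Fin n) ℂ := fun Λ => exp ((Complex.I * (t:ℂ)) • M Λ) with hU
  set V : ℝ → Matrix (Fin n) (Fin n) ℂ := fun Λ => exp ((-(Complex.I * (t:ℂ))) • M Λ) with hV
  have hUnorm : ∀ Λ : ℝ, ‖U Λ‖ = 1 := fun Λ => norm_exp_I_smul hn (hMherm Λ) t
  have hVnorm : ∀ Λ : ℝ, ‖V Λ‖ = 1 := by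
    intro Λ
    have : (-(Complex.I * (t:ℂ))) • M Λ = (Complex.I * ((-t : ℝ) : ℂ)) • M Λ := by
      congr 1; push_cast; ring
    rw [hV]; beta_reduce; rw [this]
    exact norm_exp_I_smul hn (hMherm Λ) (-t)
  have hUs : ∀ z : ℝ, ∀ s ∈ Icc (0:ℝ) 1,
      ‖exp ((s:ℂ) • ((Complex.I * (t:ℂ)) • M z))‖ ≤ 1 := by
    intro z s _
    rw [smul_smul, show (s:ℂ) * (Complex.I * (t:ℂ)) = Complex.I * (((s*t : ℝ)) : ℂ) by
      push_cast; ring]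
    exact (norm_exp_I_smul hn (hMherm z) (s*t)).le
  have hVs : ∀ z : ℝ, ∀ s ∈ Icc (0:ℝ) 1,
      ‖exp ((s:ℂ) • ((-(Complex.I * (t:ℂ))) • M z))‖ ≤ 1 := by
    intro z s _
    rw [smul_smul, show (s:ℂ) * (-(Complex.I * (t:ℂ))) = Complex.I * (((-(s*t) : ℝ)) : ℂ) by
      push_cast; ring]
    exact (norm_exp_I_smul hn (hMherm z) (-(s*t))).le
  have hMd : ∀ c : ℂ, c • M x - c • M y = (c * (((x - y : ℝ)) : ℂ)) • K := by
    intro c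
    rw [hM]
    push_cast
    rw [← smul_sub]
    rw [show LA + (x:ℂ) • K - (LA + (y:ℂ) • K) = ((x:ℂ) - (y:ℂ)) • K by
      rw [sub_smul]; abel]
    rw [smul_smul]
  have hUdiff : ‖U x - U y‖ ≤ ‖K‖ * t * |x - y| := by
    calc ‖U x - U y‖ ≤ ‖(Complex.I * (t:ℂ)) • M x - (Complex.I * (t:ℂ)) • M y‖ :=
          norm_exp_sub_exp_le (hUs x) (hUs y)
      _ = ‖K‖ * t * |x - y| := by
          rw [hMd, norm_smul, norm_mul, norm_mul, Complex.norm_I, one_mul,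
            Complex.norm_real, Complex.norm_real, Real.norm_eq_abs, Real.norm_eq_abs,
            abs_of_nonneg ht]
          ring
  have hVdiff : ‖V x - V y‖ ≤ ‖K‖ * t * |x - y| := by
    calc ‖V x - V y‖ ≤ ‖(-(Complex.I * (t:ℂ))) • M x - (-(Complex.I * (t:ℂ))) • M y‖ :=
          norm_exp_sub_exp_le (hVs x) (hVs y)
      _ = ‖K‖ * t * |x - y| := by
          rw [hMd, norm_smul, norm_mul, norm_neg, norm_mul, Complex.norm_I, one_mul,
            Complex.norm_real, Complex.norm_real, Real.norm_eq_abs, Real.norm_eq_abs,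
            abs_of_nonneg ht]
          ring
  set G : ℝ → Matrix (Fin n) (Fin n) ℂ := fun Λ => U Λ * D * V Λ with hG
  have hGdiff : ‖G x - G y‖ ≤ 2 * (‖K‖ * ‖D‖ * t) * |x - y| := by
    have hsplit : G x - G y = (U x - U y) * D * V x + U y * D * (V x - V y) :=
      mul_split (U x) (U y) D (V x) (V y)
    rw [hsplit]
    calc ‖(U x - U y) * D * V x + U y * D * (V x - V y)‖
        ≤ ‖(U x - U y) * D * V x‖ + ‖U y * D * (V x - V y)‖ := norm_add_le _ _
      _ ≤ ‖U x - U y‖ * ‖D‖ * ‖V x‖ + ‖U y‖ * ‖D‖ * ‖V x - V y‖ := by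
          gcongr
          · exact le_trans (norm_mul_le _ _) (by gcongr; exact norm_mul_le _ _)
          · exact le_trans (norm_mul_le _ _) (by gcongr; exact norm_mul_le _ _)
      _ ≤ (‖K‖ * t * |x - y|) * ‖D‖ * 1 + 1 * ‖D‖ * (‖K‖ * t * |x - y|) := by
          rw [hVnorm x, hUnorm y]
          exact add_le_add
            (mul_le_mul_of_nonneg_right
              (mul_le_mul_of_nonneg_right hUdiff (norm_nonneg _)) zero_le_one)
            (mul_le_mul_of_nonneg_left hVdiff (by positivity))
      _ = 2 * (‖K‖ * ‖D‖ * t) * |x - y| := by ring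
  have hfd : interpExpect LA LB HA HB ρ₀ t x - interpExpect LA LB HA HB ρ₀ t y
      = (inner ℂ ρ₀ ((Matrix.toEuclideanLin (G x - G y)) ρ₀) : ℂ).re := by
    unfold interpExpect
    rw [map_sub, LinearMap.sub_apply, inner_sub_right]
    rfl
  rw [hfd]
  calc |(inner ℂ ρ₀ ((Matrix.toEuclideanLin (G x - G y)) ρ₀) : ℂ).re| ≤ ‖G x - G y‖ :=
        re_inner_toEuclideanLin_le hρ₀
    _ ≤ 2 * (‖K‖ * ‖D‖ * t) * |x - y| := hGdiff
    _ = 2 * (‖LB - LA‖ * ‖HB - HA‖ * t) * |x - y| := by rw [hK, hD]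

/-- Discretization error of thermodynamic integration by the left Riemann sum:
`|∫₀¹ ⟨H_B - H_A⟩_Λ dΛ - (1/N_Λ) Σ_{k=0}^{N_Λ-1} ⟨H_B - H_A⟩_{k/N_Λ}|
  ≤ ‖L_B - L_A‖ ‖H_B - H_A‖ t_eq / N_Λ`. -/
theorem thermodynamic_integration_discretization_error {n : ℕ} (hn : 1 ≤ n)
    (LA LB HA HB : Matrix (Fin n) (Fin n) ℂ)
    (hLA : LA.IsHermitian) (hLB : LB.IsHermitian)
    (hHA : HA.IsHermitian) (hHB : HB.IsHermitian)
    (ρ₀ : EuclideanSpace ℂ (Fin n)) (hρ₀ : ‖ρ₀‖ = 1)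
    (teq : ℝ) (hteq : 0 ≤ teq) (NΛ : ℕ) (hNΛ : 1 ≤ NΛ) :
    |(∫ Λ in (0:ℝ)..1, interpExpect LA LB HA HB ρ₀ teq Λ)
        - (1 / NΛ) * ∑ k ∈ Finset.range NΛ, interpExpect LA LB HA HB ρ₀ teq (k / NΛ)|
      ≤ ‖LB - LA‖ * ‖HB - HA‖ * teq / NΛ := by
  have hC : (0:ℝ) ≤ 2 * (‖LB - LA‖ * ‖HB - HA‖ * teq) := by positivity
  have hlip := interpExpect_lipschitz hn LA LB HA HB hLA hLB ρ₀ hρ₀ teq hteq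
  have h := riemann_bound hC hlip hNΛ
  refine h.trans_eq ?_
  rw [mul_div_mul_left _ _ (two_ne_zero)]
end
end

section
/- Let n ≥ 1, let H : ℝ → (n×n complex matrices) be differentiable at x₀ with H(x) Hermitian for all x, let ψ : ℝ → ℂⁿ be differentiable at x₀ with ‖ψ(x)‖ = 1 for all x in a neighborhood of x₀, and let E : ℝ → ℝ satisfy H(x)·ψ(x) = E(x)·ψ(x) for all x in a neighborhood of x₀. Let B be an n×n complex matrix with ‖B‖ ≤ τ and ‖B − H'(x₀)‖ ≤ ε_force in ℓ² operator norm, and let φ be a unit vector in ℂⁿ with ‖φ − ψ(x₀)‖ ≤ d. Then E is differentiable at x₀ and |⟨φ, B·φ⟩ − E'(x₀)| ≤ 2τd + ε_force. -/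
open scoped Matrix.Norms.L2Operator

private lemma euclid_hasDerivAt_of_components {n : ℕ} {f : ℝ → EuclideanSpace ℂ (Fin n)}
    {x₀ : ℝ} {f' : EuclideanSpace ℂ (Fin n)}
    (h : ∀ i, HasDerivAt (fun x => f x i) (f' i) x₀) : HasDerivAt f f' x₀ := by
  set e : EuclideanSpace ℂ (Fin n) →L[ℝ] (Fin n → ℂ) :=
    ((PiLp.continuousLinearEquiv 2 ℂ (fun _ : Fin n => ℂ) :
      EuclideanSpace ℂ (Fin n) →L[ℂ] (Fin n → ℂ))).restrictScalars ℝ with he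
  set e' : (Fin n → ℂ) →L[ℝ] EuclideanSpace ℂ (Fin n) :=
    (((PiLp.continuousLinearEquiv 2 ℂ (fun _ : Fin n => ℂ)).symm :
      (Fin n → ℂ) →L[ℂ] EuclideanSpace ℂ (Fin n))).restrictScalars ℝ with he'
  have h1 : HasDerivAt (fun x => e (f x)) (e f') x₀ := hasDerivAt_pi.mpr h
  exact e'.hasFDerivAt.comp_hasDerivAt x₀ h1

private lemma euclid_component_hasDerivAt {n : ℕ} {ψ : ℝ → EuclideanSpace ℂ (Fin n)}
    {x₀ : ℝ} {ψ' : EuclideanSpace ℂ (Fin n)} (h : HasDerivAt ψ ψ' x₀) (i : Fin n) :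
    HasDerivAt (fun x => ψ x i) (ψ' i) x₀ :=
  ((EuclideanSpace.proj (𝕜 := ℂ) i).restrictScalars ℝ).hasFDerivAt.comp_hasDerivAt x₀ h

private lemma toEuclideanLin_norm_le {n : ℕ} (A : Matrix (Fin n) (Fin n) ℂ)
    (v : EuclideanSpace ℂ (Fin n)) : ‖Matrix.toEuclideanLin A v‖ ≤ ‖A‖ * ‖v‖ := by
  simpa [Matrix.toEuclideanLin_apply] using Matrix.l2_opNorm_mulVec A v

/-- Error analysis of the diagonal block encoding of the electronic force via the
Hellmann–Feynman theorem: with `H x` a Hermitian family differentiable (entrywise) at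
`x₀` with derivative `H'`, `ψ x` a normalized eigenvector family differentiable at
`x₀` with eigenvalue `E x` near `x₀`, `B` a matrix with `‖B‖ ≤ τ` and
`‖B - H'(x₀)‖ ≤ ε_force` in spectral norm, and `φ` a unit vector with
`‖φ - ψ(x₀)‖ ≤ d`, the energy `E` is differentiable at `x₀` and
`|⟨φ, Bφ⟩ - E'(x₀)| ≤ 2τd + ε_force`. -/
theorem force_encoding_hellmann_feynman_error {n : ℕ} (hn : 1 ≤ n)
    (H : ℝ → Matrix (Fin n) (Fin n) ℂ) (H' : Matrix (Fin n) (Fin n) ℂ) (x₀ : ℝ)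
    (hHderiv : ∀ i j, HasDerivAt (fun x => H x i j) (H' i j) x₀)
    (hHerm : ∀ x, (H x).IsHermitian)
    (ψ : ℝ → EuclideanSpace ℂ (Fin n)) (hψdiff : DifferentiableAt ℝ ψ x₀)
    (hψnorm : ∀ᶠ x in nhds x₀, ‖ψ x‖ = 1)
    (E : ℝ → ℝ)
    (heig : ∀ᶠ x in nhds x₀, Matrix.toEuclideanLin (H x) (ψ x) = (E x : ℂ) • ψ x)
    (B : Matrix (Fin n) (Fin n) ℂ) (τ εforce d : ℝ)
    (hB : ‖B‖ ≤ τ) (hBH : ‖B - H'‖ ≤ εforce)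
    (φ : EuclideanSpace ℂ (Fin n)) (hφ : ‖φ‖ = 1) (hd : ‖φ - ψ x₀‖ ≤ d) :
    DifferentiableAt ℝ E x₀ ∧
      ‖(inner ℂ φ (Matrix.toEuclideanLin B φ) : ℂ) - ((deriv E x₀ : ℝ) : ℂ)‖
        ≤ 2 * τ * d + εforce := by
  have hψ' : HasDerivAt ψ (deriv ψ x₀) x₀ := hψdiff.hasDerivAt
  set ψ' : EuclideanSpace ℂ (Fin n) := deriv ψ x₀ with hψ'def
  set ψ₀ : EuclideanSpace ℂ (Fin n) := ψ x₀ with hψ₀def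
  have hψi : ∀ i, HasDerivAt (fun x => ψ x i) (ψ' i) x₀ :=
    fun i => euclid_component_hasDerivAt hψ' i
  set F' : EuclideanSpace ℂ (Fin n) :=
    Matrix.toEuclideanLin H' ψ₀ + Matrix.toEuclideanLin (H x₀) ψ' with hF'def
  have hF : HasDerivAt (fun x => Matrix.toEuclideanLin (H x) (ψ x)) F' x₀ := by
    apply euclid_hasDerivAt_of_components
    intro i
    have hcomp : F' i = ∑ j, (H' i j * ψ₀ j + H x₀ i j * ψ' j) := by
      have : F' i = (∑ j, H' i j * ψ₀ j) + ∑ j, H x₀ i j * ψ' j := rfl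
      rw [this, ← Finset.sum_add_distrib]
    rw [hcomp]
    have : (fun x => Matrix.toEuclideanLin (H x) (ψ x) i)
        = fun x => ∑ j, H x i j * ψ x j := rfl
    rw [this]
    exact HasDerivAt.fun_sum fun j _ => (hHderiv i j).mul (hψi j)
  -- derivative of the full quadratic form
  have hf : HasDerivAt (fun x => (inner ℂ (ψ x) (Matrix.toEuclideanLin (H x) (ψ x)) : ℂ))
      ((inner ℂ ψ₀ F' : ℂ) + inner ℂ ψ' (Matrix.toEuclideanLin (H x₀) ψ₀)) x₀ :=
    HasDerivAt.inner ℂ hψ' hF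
  -- derivative of the squared norm is zero
  have hgs : HasDerivAt (fun x => (inner ℂ (ψ x) (ψ x) : ℂ))
      ((inner ℂ ψ₀ ψ' : ℂ) + inner ℂ ψ' ψ₀) x₀ := HasDerivAt.inner ℂ hψ' hψ'
  have hone : (fun x => (inner ℂ (ψ x) (ψ x) : ℂ)) =ᶠ[nhds x₀] fun _ => 1 := by
    filter_upwards [hψnorm] with x hx
    rw [inner_self_eq_norm_sq_to_K, hx]
    norm_num
  have hzero : (inner ℂ ψ₀ ψ' : ℂ) + inner ℂ ψ' ψ₀ = 0 :=
    hgs.unique ((hasDerivAt_const x₀ (1 : ℂ)).congr_of_eventuallyEq hone)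
  -- the quadratic form equals E near x₀
  have hfE : (fun x => (inner ℂ (ψ x) (Matrix.toEuclideanLin (H x) (ψ x)) : ℂ))
      =ᶠ[nhds x₀] fun x => (E x : ℂ) := by
    filter_upwards [heig, hψnorm] with x h1 h2
    rw [h1, inner_smul_right, inner_self_eq_norm_sq_to_K, h2]
    push_cast
    ring
  set D : ℂ := (inner ℂ ψ₀ F' : ℂ) + inner ℂ ψ' (Matrix.toEuclideanLin (H x₀) ψ₀) with hDdef
  have hE : HasDerivAt E D.re x₀ := by
    have h1 : HasDerivAt (fun x =>
        ((inner ℂ (ψ x) (Matrix.toEuclideanLin (H x) (ψ x)) : ℂ)).re) D.re x₀ :=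
      Complex.reCLM.hasFDerivAt.comp_hasDerivAt x₀ hf
    apply h1.congr_of_eventuallyEq
    filter_upwards [hfE] with x hx
    rw [hx]
    simp
  -- H' is Hermitian
  have hH' : H'.IsHermitian := by
    rw [Matrix.IsHermitian]
    ext i j
    have h2 : HasDerivAt (fun x => (starRingEnd ℂ) (H x j i)) ((starRingEnd ℂ) (H' j i)) x₀ :=
      (Complex.conjCLE.toContinuousLinearMap).hasFDerivAt.comp_hasDerivAt x₀ (hHderiv j i)
    have h3 : (fun x => (starRingEnd ℂ) (H x j i)) = fun x => H x i j := by
      funext x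
      have := (hHerm x).apply i j
      simpa [Matrix.conjTranspose_apply] using this
    rw [h3] at h2
    have h4 := h2.unique (hHderiv i j)
    simpa [Matrix.conjTranspose_apply] using h4
  have hE0 : Matrix.toEuclideanLin (H x₀) ψ₀ = (E x₀ : ℂ) • ψ₀ := heig.self_of_nhds
  have hsym := Matrix.isHermitian_iff_isSymmetric.mp (hHerm x₀)
  have hsym' := Matrix.isHermitian_iff_isSymmetric.mp hH'
  have hDval : D = inner ℂ ψ₀ (Matrix.toEuclideanLin H' ψ₀) := by
    have e1 : (inner ℂ ψ₀ (Matrix.toEuclideanLin (H x₀) ψ') : ℂ)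
        = (E x₀ : ℂ) * inner ℂ ψ₀ ψ' := by
      rw [← hsym ψ₀ ψ', hE0, inner_smul_left, Complex.conj_ofReal]
    have e2 : (inner ℂ ψ' (Matrix.toEuclideanLin (H x₀) ψ₀) : ℂ)
        = (E x₀ : ℂ) * inner ℂ ψ' ψ₀ := by
      rw [hE0, inner_smul_right]
    calc D = (inner ℂ ψ₀ (Matrix.toEuclideanLin H' ψ₀) : ℂ)
          + (E x₀ : ℂ) * ((inner ℂ ψ₀ ψ' : ℂ) + inner ℂ ψ' ψ₀) := by
          rw [hDdef, hF'def, inner_add_right, e1, e2]; ring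
      _ = inner ℂ ψ₀ (Matrix.toEuclideanLin H' ψ₀) := by rw [hzero]; ring
  have hreal : (starRingEnd ℂ) D = D := by
    rw [hDval, inner_conj_symm]
    exact hsym' ψ₀ ψ₀
  have hDre : ((D.re : ℝ) : ℂ) = D := Complex.conj_eq_iff_re.mp hreal
  refine ⟨hE.differentiableAt, ?_⟩
  rw [hE.deriv, hDre, hDval]
  -- error decomposition
  set u : EuclideanSpace ℂ (Fin n) := φ - ψ₀ with hudef
  have hsplit : (inner ℂ φ (Matrix.toEuclideanLin B φ) : ℂ)
        - inner ℂ ψ₀ (Matrix.toEuclideanLin H' ψ₀)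
      = (inner ℂ u (Matrix.toEuclideanLin B φ) : ℂ)
        + inner ℂ ψ₀ (Matrix.toEuclideanLin B u)
        + inner ℂ ψ₀ (Matrix.toEuclideanLin (B - H') ψ₀) := by
    simp only [hudef, map_sub, LinearMap.sub_apply, inner_sub_left, inner_sub_right]
    ring
  have hψ₀n : ‖ψ₀‖ = 1 := hψnorm.self_of_nhds
  have hd0 : 0 ≤ d := le_trans (norm_nonneg _) hd
  have hτ0 : 0 ≤ τ := le_trans (norm_nonneg _) hB
  have b1 : ‖(inner ℂ u (Matrix.toEuclideanLin B φ) : ℂ)‖ ≤ d * τ := by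
    refine le_trans (norm_inner_le_norm _ _) ?_
    have h5 : ‖Matrix.toEuclideanLin B φ‖ ≤ τ := by
      calc ‖Matrix.toEuclideanLin B φ‖ ≤ ‖B‖ * ‖φ‖ := toEuclideanLin_norm_le B φ
        _ ≤ τ := by rw [hφ, mul_one]; exact hB
    exact mul_le_mul hd h5 (norm_nonneg _) hd0
  have b2 : ‖(inner ℂ ψ₀ (Matrix.toEuclideanLin B u) : ℂ)‖ ≤ τ * d := by
    refine le_trans (norm_inner_le_norm _ _) ?_
    rw [hψ₀n, one_mul]
    calc ‖Matrix.toEuclideanLin B u‖ ≤ ‖B‖ * ‖u‖ := toEuclideanLin_norm_le B u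
      _ ≤ τ * d := mul_le_mul hB hd (norm_nonneg _) hτ0
  have b3 : ‖(inner ℂ ψ₀ (Matrix.toEuclideanLin (B - H') ψ₀) : ℂ)‖ ≤ εforce := by
    refine le_trans (norm_inner_le_norm _ _) ?_
    rw [hψ₀n, one_mul]
    calc ‖Matrix.toEuclideanLin (B - H') ψ₀‖ ≤ ‖B - H'‖ * ‖ψ₀‖ :=
        toEuclideanLin_norm_le (B - H') ψ₀
      _ ≤ εforce := by rw [hψ₀n, mul_one]; exact hBH
  calc ‖(inner ℂ φ (Matrix.toEuclideanLin B φ) : ℂ)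
        - inner ℂ ψ₀ (Matrix.toEuclideanLin H' ψ₀)‖
      = ‖(inner ℂ u (Matrix.toEuclideanLin B φ) : ℂ)
        + inner ℂ ψ₀ (Matrix.toEuclideanLin B u)
        + inner ℂ ψ₀ (Matrix.toEuclideanLin (B - H') ψ₀)‖ := by rw [hsplit]
    _ ≤ ‖(inner ℂ u (Matrix.toEuclideanLin B φ) : ℂ)
        + inner ℂ ψ₀ (Matrix.toEuclideanLin B u)‖
        + ‖(inner ℂ ψ₀ (Matrix.toEuclideanLin (B - H') ψ₀) : ℂ)‖ := norm_add_le _ _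
    _ ≤ (‖(inner ℂ u (Matrix.toEuclideanLin B φ) : ℂ)‖
        + ‖(inner ℂ ψ₀ (Matrix.toEuclideanLin B u) : ℂ)‖)
        + ‖(inner ℂ ψ₀ (Matrix.toEuclideanLin (B - H') ψ₀) : ℂ)‖ := by
        gcongr; exact norm_add_le _ _
    _ ≤ 2 * τ * d + εforce := by
        have := b1; have := b2; have := b3; linarith
end
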